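/- Let t ≥ 2, λ ≥ 1, and let ℬ be a t-(v,k,λ) design on X = {1,…,v} which is non-empty and not equal to the family of all k-subsets of X. Then every non-trivial polynomial f ∈ I(ℬ) satisfies deg f > t/2; consequently γ1(ℬ) ≥ (t+1)/2. -/

import Mathlib

noncomputable section

variable {σ : Type*}

/-- Characteristic 0-1 vector `c_B` of a finite set `B` of points. -/
def charVec [DecidableEq σ] (B : Finset σ) : σ → ℂ := fun i => if i ∈ B then 1 else 0

/-- `I(ℬ)`: the ideal of all polynomials vanishing at the characteristic vector of
every block of `ℬ`. -/
def designIdeal [DecidableEq σ] (ℬ : Finset (Finset σ)) : Ideal (MvPolynomial σ ℂ) :=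
  ⨅ B ∈ ℬ, RingHom.ker (MvPolynomial.eval (charVec B))

/-- The generating set `G₀ = {x₁ + ⋯ + x_v - k} ∪ {xᵢ² - xᵢ}`. -/
def G0 (σ : Type*) [Fintype σ] (k : ℕ) : Set (MvPolynomial σ ℂ) :=
  insert ((∑ i, MvPolynomial.X i) - MvPolynomial.C (k : ℂ))
    (Set.range fun i : σ => MvPolynomial.X i ^ 2 - MvPolynomial.X i)

/-- The trivial ideal `T = ⟨G₀⟩`. -/
def trivialIdeal (σ : Type*) [Fintype σ] (k : ℕ) : Ideal (MvPolynomial σ ℂ) :=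
  Ideal.span (G0 σ k)

/-- `γ₁`: minimum total degree of a non-trivial polynomial in the ideal of the design. -/
def gamma1 [Fintype σ] [DecidableEq σ] (k : ℕ) (ℬ : Finset (Finset σ)) : ℕ :=
  sInf {d : ℕ | ∃ f ∈ designIdeal ℬ, f ∉ trivialIdeal σ k ∧ f.totalDegree = d}

/-- `γ₂`: least `s` such that `I(ℬ)` is generated by polynomials of total degree `≤ s`. -/
def gamma2 [Fintype σ] [DecidableEq σ] (ℬ : Finset (Finset σ)) : ℕ :=
  sInf {s : ℕ | ∃ G : Set (MvPolynomial σ ℂ),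
    (∀ g ∈ G, g.totalDegree ≤ s) ∧ Ideal.span G = designIdeal ℬ}

/-- `ℬ` is a `t`-`(v,k,lam)` design: all blocks have size `k` and every `t`-element
subset of the point set lies in exactly `lam` blocks. -/
def IsDesign [DecidableEq σ] (ℬ : Finset (Finset σ)) (k t lam : ℕ) : Prop :=
  (∀ B ∈ ℬ, B.card = k) ∧
  ∀ T : Finset σ, T.card = t → (ℬ.filter fun B => T ⊆ B).card = lam



open MvPolynomial

def sqIdeal (σ : Type*) : Ideal (MvPolynomial σ ℂ) :=
  Ideal.span (Set.range fun i : σ => X i ^ 2 - X i)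

lemma eval_charVec_monomial [DecidableEq σ] (B : Finset σ) (a : σ →₀ ℕ) (c : ℂ) :
    eval (charVec B) (monomial a c) = if a.support ⊆ B then c else 0 := by
  rw [eval_monomial]
  by_cases h : a.support ⊆ B
  · rw [if_pos h]
    have : (a.prod fun i e => charVec B i ^ e) = 1 := by
      apply Finset.prod_eq_one
      intro i hi
      have : charVec B i = 1 := by simp [charVec, h hi]
      simp [this]
    rw [this, mul_one]
  · rw [if_neg h]
    obtain ⟨i, hi, hiB⟩ := Finset.not_subset.mp h
    have : (a.prod fun i e => charVec B i ^ e) = 0 := by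
      apply Finset.prod_eq_zero hi
      have h1 : charVec B i = 0 := by simp [charVec, hiB]
      have h2 : a i ≠ 0 := Finsupp.mem_support_iff.mp hi
      simp [h1, zero_pow h2]
    rw [this, mul_zero]

/-- indicator Finsupp of the support of `a` -/
def mlin (a : σ →₀ ℕ) : σ →₀ ℕ :=
  ⟨a.support, fun i => if a i = 0 then 0 else 1, by intro i; simp⟩

lemma mlin_apply (a : σ →₀ ℕ) (i : σ) : mlin a i = if a i = 0 then 0 else 1 := rfl
lemma mlin_support (a : σ →₀ ℕ) : (mlin a).support = a.support := rfl

lemma mk_X_pow (i : σ) (e : ℕ) (he : e ≠ 0) :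
    Ideal.Quotient.mk (sqIdeal σ) (X i ^ e) = Ideal.Quotient.mk (sqIdeal σ) (X i) := by
  have hsq : Ideal.Quotient.mk (sqIdeal σ) (X i) ^ 2 = Ideal.Quotient.mk (sqIdeal σ) (X i) := by
    rw [← map_pow, ← sub_eq_zero, ← map_sub, Ideal.Quotient.eq_zero_iff_mem]
    exact Ideal.subset_span ⟨i, rfl⟩
  obtain ⟨d, rfl⟩ := Nat.exists_eq_succ_of_ne_zero he
  clear he
  induction d with
  | zero => simp
  | succ n ih =>
      rw [map_pow] at ih ⊢
      rw [pow_succ, ih, ← pow_two, hsq]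

lemma mk_monomial (a : σ →₀ ℕ) (c : ℂ) :
    Ideal.Quotient.mk (sqIdeal σ) (monomial a c)
      = Ideal.Quotient.mk (sqIdeal σ) (monomial (mlin a) c) := by
  rw [monomial_eq, monomial_eq, map_mul, map_mul]
  congr 1
  rw [Finsupp.prod, Finsupp.prod, mlin_support, map_prod, map_prod]
  apply Finset.prod_congr rfl
  intro i hi
  rw [mk_X_pow i _ (Finsupp.mem_support_iff.mp hi), mlin_apply,
    if_neg (Finsupp.mem_support_iff.mp hi), pow_one]

lemma monomial_sub_mlin_mem (a : σ →₀ ℕ) (c : ℂ) :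
    monomial a c - monomial (mlin a) c ∈ sqIdeal σ := by
  rw [← Ideal.Quotient.eq_zero_iff_mem, map_sub, mk_monomial, sub_self]

/-- multilinearization of a polynomial -/
def mlinPoly (f : MvPolynomial σ ℂ) : MvPolynomial σ ℂ :=
  ∑ a ∈ f.support, monomial (mlin a) (coeff a f)

lemma sub_mlinPoly_mem (f : MvPolynomial σ ℂ) : f - mlinPoly f ∈ sqIdeal σ := by
  have h : f - mlinPoly f
      = ∑ a ∈ f.support, (monomial a (coeff a f) - monomial (mlin a) (coeff a f)) := by
    rw [Finset.sum_sub_distrib, ← mlinPoly]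
    congr 1
    exact f.as_sum
  rw [h]
  exact Ideal.sum_mem _ fun a _ => monomial_sub_mlin_mem a (coeff a f)

lemma totalDegree_mlinPoly_le (f : MvPolynomial σ ℂ) :
    (mlinPoly f).totalDegree ≤ f.totalDegree := by
  apply (totalDegree_finset_sum _ _).trans
  apply Finset.sup_le
  intro a ha
  apply (totalDegree_monomial_le _ _).trans
  have h1 : (mlin a).sum (fun _ e => e) = ∑ i ∈ a.support, mlin a i := by
    rw [Finsupp.sum, mlin_support]
  rw [Finsupp.sum, mlin_support]
  calc ∑ i ∈ a.support, mlin a i ≤ ∑ i ∈ a.support, a i := by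
        apply Finset.sum_le_sum
        intro i hi
        rw [mlin_apply, if_neg (Finsupp.mem_support_iff.mp hi)]
        exact Nat.one_le_iff_ne_zero.mpr (Finsupp.mem_support_iff.mp hi)
    _ ≤ f.totalDegree := le_totalDegree ha

lemma mlinPoly_multilinear [DecidableEq σ] (f : MvPolynomial σ ℂ) :
    ∀ b ∈ (mlinPoly f).support, ∀ i, b i ≤ 1 := by
  intro b hb i
  have := MvPolynomial.support_sum hb
  obtain ⟨a, _, hab⟩ := Finset.mem_biUnion.mp this
  have := support_monomial_subset hab
  rw [Finset.mem_singleton] at this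
  subst this
  rw [mlin_apply]
  split <;> simp

lemma eval_charVec_mlinPoly [DecidableEq σ] (B : Finset σ) (f : MvPolynomial σ ℂ) :
    eval (charVec B) (mlinPoly f) = eval (charVec B) f := by
  conv_rhs => rw [f.as_sum]
  rw [mlinPoly, map_sum, map_sum]
  apply Finset.sum_congr rfl
  intro a _
  rw [eval_charVec_monomial, eval_charVec_monomial, mlin_support]

/-- a multilinear polynomial vanishing on all 0-1 points is zero -/
lemma multilinear_eq_zero [DecidableEq σ] (g : MvPolynomial σ ℂ)
    (hml : ∀ b ∈ g.support, ∀ i, b i ≤ 1)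
    (hv : ∀ B : Finset σ, eval (charVec B) g = 0) : g = 0 := by
  by_contra hg
  obtain ⟨a₀, ha₀, hmin⟩ := Finset.exists_min_image g.support (fun a => a.support.card)
    (support_nonempty.mpr hg)
  have h0 := hv a₀.support
  conv_lhs at h0 => rw [g.as_sum, map_sum]
  have hterm : ∀ a ∈ g.support,
      eval (charVec a₀.support) (monomial a (coeff a g))
        = if a = a₀ then coeff a g else 0 := by
    intro a ha
    rw [eval_charVec_monomial]
    by_cases h : a.support ⊆ a₀.support
    · have hcard := hmin a ha
      have hsupp : a.support = a₀.support :=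
        Finset.eq_of_subset_of_card_le h (hmin a ha)
      have : a = a₀ := by
        ext i
        by_cases hi : i ∈ a.support
        · have hi' : i ∈ a₀.support := hsupp ▸ hi
          have h1 : 1 ≤ a i := Nat.one_le_iff_ne_zero.mpr (Finsupp.mem_support_iff.mp hi)
          have h2 : 1 ≤ a₀ i := Nat.one_le_iff_ne_zero.mpr (Finsupp.mem_support_iff.mp hi')
          have := hml a ha i
          have := hml a₀ ha₀ i
          omega
        · have hi' : i ∉ a₀.support := hsupp ▸ hi
          rw [Finsupp.notMem_support_iff.mp hi, Finsupp.notMem_support_iff.mp hi']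
      rw [if_pos h, if_pos this]
    · rw [if_neg h, if_neg]
      rintro rfl
      exact h subset_rfl
  rw [Finset.sum_congr rfl hterm, Finset.sum_ite_eq' g.support a₀, if_pos ha₀] at h0
  exact Finsupp.mem_support_iff.mp ha₀ h0

lemma mem_sqIdeal_of_vanishing [DecidableEq σ] (f : MvPolynomial σ ℂ)
    (hv : ∀ B : Finset σ, eval (charVec B) f = 0) : f ∈ sqIdeal σ := by
  have h0 : mlinPoly f = 0 := multilinear_eq_zero _ (mlinPoly_multilinear f)
    (fun B => by rw [eval_charVec_mlinPoly]; exact hv B)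
  have h := sub_mlinPoly_mem f
  rwa [h0, sub_zero] at h

def indPoly [Fintype σ] [DecidableEq σ] (B : Finset σ) : MvPolynomial σ ℂ :=
  (∏ i ∈ B, X i) * ∏ i ∈ Bᶜ, (1 - X i)

lemma eval_indPoly [Fintype σ] [DecidableEq σ] (A B : Finset σ) :
    eval (charVec A) (indPoly B) = if A = B then 1 else 0 := by
  rw [indPoly, map_mul, map_prod, map_prod]
  by_cases h : A = B
  · subst h
    rw [if_pos rfl]
    rw [Finset.prod_congr rfl (fun i hi => by simp [charVec, hi] : ∀ i ∈ A, eval (charVec A) (X i) = 1)]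
    rw [Finset.prod_congr rfl (fun i hi => by
      simp only [Finset.mem_compl] at hi
      simp [charVec, hi] : ∀ i ∈ Aᶜ, eval (charVec A) (1 - X i) = 1)]
    simp
  · rw [if_neg h]
    have : ∃ i, (i ∈ B ∧ i ∉ A) ∨ (i ∈ A ∧ i ∉ B) := by
      by_contra hc
      push_neg at hc
      exact h (Finset.ext fun i => ⟨fun hi => by have := hc i; tauto, fun hi => by have := hc i; tauto⟩)
    obtain ⟨i, hi | hi⟩ := this
    · apply mul_eq_zero_of_left
      apply Finset.prod_eq_zero hi.1
      simp [charVec, hi.2]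
    · apply mul_eq_zero_of_right
      apply Finset.prod_eq_zero (Finset.mem_compl.mpr hi.2)
      simp [charVec, hi.1]

lemma exists_poly_of_fun [Fintype σ] [DecidableEq σ] (F : Finset σ → ℂ) :
    ∃ h : MvPolynomial σ ℂ, ∀ A : Finset σ, eval (charVec A) h = F A := by
  refine ⟨∑ B, C (F B) * indPoly B, fun A => ?_⟩
  rw [map_sum]
  simp only [map_mul, eval_C, eval_indPoly, mul_ite, mul_one, mul_zero]
  rw [Finset.sum_ite_eq Finset.univ A F, if_pos (Finset.mem_univ A)]

lemma eval_charVec_card [Fintype σ] [DecidableEq σ] (B : Finset σ) :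
    eval (charVec B) (∑ i, (X i : MvPolynomial σ ℂ)) = (B.card : ℂ) := by
  rw [map_sum]
  simp only [eval_X, charVec]
  rw [Finset.sum_ite_mem, Finset.univ_inter, Finset.sum_const, nsmul_eq_mul, mul_one]

lemma mem_trivialIdeal_iff [Fintype σ] [DecidableEq σ] (k : ℕ) (f : MvPolynomial σ ℂ) :
    f ∈ trivialIdeal σ k ↔ ∀ K : Finset σ, K.card = k → eval (charVec K) f = 0 := by
  constructor
  · intro hf K hK
    have : trivialIdeal σ k ≤ RingHom.ker (eval (charVec K)) := by
      rw [trivialIdeal, Ideal.span_le]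
      rintro g (rfl | ⟨i, rfl⟩) <;> simp only [SetLike.mem_coe, RingHom.mem_ker]
      · rw [map_sub, eval_charVec_card, eval_C, hK, sub_self]
      · have : eval (charVec K) (X i) * eval (charVec K) (X i) = eval (charVec K) (X i) := by
          simp only [eval_X, charVec]; split <;> ring
        rw [map_sub, map_pow, pow_two, this, sub_self]
    exact this hf
  · intro hv
    obtain ⟨h, hh⟩ := exists_poly_of_fun
      (fun B => if B.card = k then 0 else (eval (charVec B) f) / ((B.card : ℂ) - k))
    have hgen : ((∑ i, X i) - C (k : ℂ)) ∈ trivialIdeal σ k :=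
      Ideal.subset_span (Set.mem_insert _ _)
    have hsq : sqIdeal σ ≤ trivialIdeal σ k :=
      Ideal.span_mono (Set.subset_insert _ _)
    have hg : f - ((∑ i, X i) - C (k : ℂ)) * h ∈ sqIdeal σ := by
      apply mem_sqIdeal_of_vanishing
      intro B
      rw [map_sub, map_mul, map_sub, eval_charVec_card, eval_C, hh]
      by_cases hB : B.card = k
      · rw [if_pos hB, hv B hB, hB, sub_self, mul_zero, sub_zero]
      · rw [if_neg hB]
        have hne : (B.card : ℂ) - (k : ℂ) ≠ 0 := by
          rw [sub_ne_zero]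
          exact_mod_cast hB
        field_simp
        ring
    have : f = (f - ((∑ i, X i) - C (k : ℂ)) * h) + ((∑ i, X i) - C (k : ℂ)) * h := by ring
    rw [this]
    exact Ideal.add_mem _ (hsq hg) (Ideal.mul_mem_right _ _ hgen)

lemma card_filter_powersetCard [DecidableEq σ] (S B : Finset σ) (t : ℕ) (hSB : S ⊆ B) (hst : S.card ≤ t) :
    ((B.powersetCard t).filter (fun T => S ⊆ T)).card
      = (B.card - S.card).choose (t - S.card) := by
  rw [← Finset.card_sdiff_of_subset hSB, ← Finset.card_powersetCard]
  apply Finset.card_bij' (fun T _ => T \ S) (fun U _ => U ∪ S)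
  · intro T hT
    simp only [Finset.mem_filter, Finset.mem_powersetCard] at hT
    obtain ⟨⟨hTB, hTt⟩, hST⟩ := hT
    rw [Finset.mem_powersetCard]
    exact ⟨Finset.sdiff_subset_sdiff hTB subset_rfl,
      by rw [Finset.card_sdiff_of_subset hST, hTt]⟩
  · intro U hU
    rw [Finset.mem_powersetCard] at hU
    obtain ⟨hUB, hUc⟩ := hU
    have hdisj : Disjoint U S := Finset.disjoint_of_subset_left hUB (Finset.sdiff_disjoint)
    simp only [Finset.mem_filter, Finset.mem_powersetCard]
    refine ⟨⟨Finset.union_subset (hUB.trans (Finset.sdiff_subset)) hSB, ?_⟩,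
      Finset.subset_union_right⟩
    rw [Finset.card_union_of_disjoint hdisj, hUc]
    omega
  · intro T hT
    simp only [Finset.mem_filter] at hT
    exact Finset.sdiff_union_of_subset hT.2
  · intro U hU
    rw [Finset.mem_powersetCard] at hU
    have hdisj : Disjoint U S := Finset.disjoint_of_subset_left hU.1 (Finset.sdiff_disjoint)
    rw [Finset.union_sdiff_right, Finset.sdiff_eq_self_of_disjoint hdisj]



lemma design_count [DecidableEq σ] [Fintype σ] (ℬ : Finset (Finset σ)) (k t lam : ℕ) (hdes : IsDesign ℬ k t lam)
    (htk : t ≤ k) (S : Finset σ) (hst : S.card ≤ t) :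
    (ℬ.filter fun B => S ⊆ B).card * (k - S.card).choose (t - S.card)
      = lam * ((Fintype.card σ) - S.card).choose (t - S.card) := by
  have key : ∑ B ∈ ℬ, ∑ T ∈ Finset.univ.powersetCard t,
      (if S ⊆ T ∧ T ⊆ B then (1:ℕ) else 0)
      = ∑ T ∈ Finset.univ.powersetCard t, ∑ B ∈ ℬ,
      (if S ⊆ T ∧ T ⊆ B then (1:ℕ) else 0) := Finset.sum_comm
  have inner1 : ∀ B ∈ ℬ, ∑ T ∈ Finset.univ.powersetCard t,
      (if S ⊆ T ∧ T ⊆ B then (1:ℕ) else 0)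
      = if S ⊆ B then (k - S.card).choose (t - S.card) else 0 := by
    intro B hB
    rw [← Finset.card_filter]
    by_cases hSB : S ⊆ B
    · rw [if_pos hSB]
      have hset : (Finset.univ.powersetCard t).filter (fun T => S ⊆ T ∧ T ⊆ B)
          = (B.powersetCard t).filter (fun T => S ⊆ T) := by
        ext T
        simp only [Finset.mem_filter, Finset.mem_powersetCard, Finset.subset_univ, true_and]
        tauto
      rw [hset, card_filter_powersetCard S B t hSB hst, hdes.1 B hB]
    · rw [if_neg hSB]
      rw [Finset.card_eq_zero, Finset.filter_eq_empty_iff]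
      intro T _
      rintro ⟨hST, hTB⟩
      exact hSB (hST.trans hTB)
  have inner2 : ∀ T ∈ Finset.univ.powersetCard t, ∑ B ∈ ℬ,
      (if S ⊆ T ∧ T ⊆ B then (1:ℕ) else 0) = if S ⊆ T then lam else 0 := by
    intro T hT
    rw [Finset.mem_powersetCard] at hT
    by_cases hST : S ⊆ T
    · rw [if_pos hST]
      rw [← hdes.2 T hT.2, ← Finset.card_filter]
      congr 1
      apply Finset.filter_congr
      intro B _
      simp [hST]
    · rw [if_neg hST]
      apply Finset.sum_eq_zero
      intro B _
      rw [if_neg (fun h => hST h.1)]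
  rw [Finset.sum_congr rfl inner1, Finset.sum_congr rfl inner2] at key
  rw [Finset.sum_ite, Finset.sum_const, Finset.sum_const_zero, add_zero,
    Finset.sum_ite, Finset.sum_const, Finset.sum_const_zero, add_zero] at key
  rw [smul_eq_mul, smul_eq_mul,
    card_filter_powersetCard S Finset.univ t (Finset.subset_univ S) hst,
    Finset.card_univ] at key
  rw [mul_comm lam]
  exact key

lemma complete_isDesign [DecidableEq σ] [Fintype σ] (k t : ℕ) (htk : t ≤ k) (hkv : k ≤ Fintype.card σ) :
    IsDesign (Finset.powersetCard k (Finset.univ : Finset σ)) k t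
      ((Fintype.card σ - t).choose (k - t)) := by
  constructor
  · intro B hB
    exact (Finset.mem_powersetCard.mp hB).2
  · intro T hT
    have := card_filter_powersetCard T (Finset.univ : Finset σ) k (Finset.subset_univ T)
      (hT ▸ htk)
    rw [hT, Finset.card_univ] at this
    rw [← this]

lemma eval_charVec_conj [DecidableEq σ] (B : Finset σ) (g : MvPolynomial σ ℂ) :
    eval (charVec B) (MvPolynomial.map (starRingEnd ℂ) g)
      = starRingEnd ℂ (eval (charVec B) g) := by
  rw [MvPolynomial.eval_map]
  rw [show (eval (charVec B)) g = eval₂ (RingHom.id ℂ) (charVec B) g from rfl]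
  rw [eval₂_comp_left (starRingEnd ℂ)]
  congr 1
  funext i
  simp only [Function.comp_apply, charVec]
  split <;> simp

lemma totalDegree_conj_le (g : MvPolynomial σ ℂ) :
    (MvPolynomial.map (starRingEnd ℂ) g).totalDegree ≤ g.totalDegree :=
  Finset.sup_mono (support_map_subset _ _)

lemma sum_eval_eq [DecidableEq σ] (𝒜 : Finset (Finset σ)) (h : MvPolynomial σ ℂ) :
    ∑ B ∈ 𝒜, eval (charVec B) h
      = ∑ a ∈ h.support, coeff a h * ((𝒜.filter fun B => a.support ⊆ B).card : ℂ) := by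
  have step : ∀ B ∈ 𝒜, eval (charVec B) h
      = ∑ a ∈ h.support, (if a.support ⊆ B then coeff a h else 0) := by
    intro B _
    conv_lhs => rw [h.as_sum]
    rw [map_sum]
    exact Finset.sum_congr rfl fun a _ => eval_charVec_monomial B a _
  rw [Finset.sum_congr rfl step, Finset.sum_comm]
  apply Finset.sum_congr rfl
  intro a _
  rw [← Finset.sum_filter, Finset.sum_const, nsmul_eq_mul, mul_comm]



lemma vanish_all [DecidableEq σ] [Fintype σ] (ℬ : Finset (Finset σ)) (k t lam : ℕ) (hdes : IsDesign ℬ k t lam)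
    (hlam : 1 ≤ lam) (htk : t ≤ k) (hkv : k ≤ Fintype.card σ)
    (g : MvPolynomial σ ℂ) (hdeg : 2 * g.totalDegree ≤ t)
    (hvan : ∀ B ∈ ℬ, eval (charVec B) g = 0) :
    ∀ K : Finset σ, K.card = k → eval (charVec K) g = 0 := by
  set v := Fintype.card σ with hv
  set lamc := (v - t).choose (k - t) with hlamc
  set 𝒦 := Finset.powersetCard k (Finset.univ : Finset σ) with h𝒦
  set h : MvPolynomial σ ℂ := g * MvPolynomial.map (starRingEnd ℂ) g with hh
  -- each monomial of h has small support
  have hsupp : ∀ a ∈ h.support, a.support.card ≤ t := by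
    intro a ha
    have h1 : a.support.card ≤ a.sum fun _ e => e := by
      rw [Finsupp.sum]
      calc a.support.card = ∑ _i ∈ a.support, 1 := by rw [Finset.sum_const, smul_eq_mul, mul_one]
        _ ≤ ∑ i ∈ a.support, a i := Finset.sum_le_sum fun i hi =>
            Nat.one_le_iff_ne_zero.mpr (Finsupp.mem_support_iff.mp hi)
    have h2 : (a.sum fun _ e => e) ≤ h.totalDegree := le_totalDegree ha
    have h3 : h.totalDegree ≤ 2 * g.totalDegree := by
      calc h.totalDegree ≤ g.totalDegree + (MvPolynomial.map (starRingEnd ℂ) g).totalDegree :=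
            totalDegree_mul _ _
        _ ≤ g.totalDegree + g.totalDegree := by
            have := totalDegree_conj_le g; omega
        _ = 2 * g.totalDegree := by ring
    omega
  -- ratio identity
  have hratio : ∀ a ∈ h.support,
      (ℬ.filter fun B => a.support ⊆ B).card * lamc
        = lam * ((𝒦.filter fun B => a.support ⊆ B).card) := by
    intro a ha
    have hs := hsupp a ha
    have e1 := design_count ℬ k t lam hdes htk a.support hs
    have e2 := design_count 𝒦 k t lamc (complete_isDesign k t htk hkv) htk a.support hs
    have hC : 0 < (k - a.support.card).choose (t - a.support.card) :=
      Nat.choose_pos (by omega)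
    have : (ℬ.filter fun B => a.support ⊆ B).card * lamc
        * ((k - a.support.card).choose (t - a.support.card))
        = lam * ((𝒦.filter fun B => a.support ⊆ B).card)
        * ((k - a.support.card).choose (t - a.support.card)) := by
      calc _ = ((ℬ.filter fun B => a.support ⊆ B).card
              * ((k - a.support.card).choose (t - a.support.card))) * lamc := by ring
        _ = (lam * ((v - a.support.card).choose (t - a.support.card))) * lamc := by rw [e1]
        _ = lam * (lamc * ((v - a.support.card).choose (t - a.support.card))) := by ring
        _ = lam * ((𝒦.filter fun B => a.support ⊆ B).card
              * ((k - a.support.card).choose (t - a.support.card))) := by rw [e2]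
        _ = _ := by ring
    exact Nat.eq_of_mul_eq_mul_right hC this
  -- global identity
  have hglobal : (lamc : ℂ) * ∑ B ∈ ℬ, eval (charVec B) h
      = (lam : ℂ) * ∑ K ∈ 𝒦, eval (charVec K) h := by
    rw [sum_eval_eq, sum_eval_eq, Finset.mul_sum, Finset.mul_sum]
    apply Finset.sum_congr rfl
    intro a ha
    have := hratio a ha
    have hcast : ((ℬ.filter fun B => a.support ⊆ B).card : ℂ) * (lamc : ℂ)
        = (lam : ℂ) * ((𝒦.filter fun B => a.support ⊆ B).card : ℂ) := by
      exact_mod_cast congrArg (Nat.cast : ℕ → ℂ) this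
    calc (lamc : ℂ) * (coeff a h * ((ℬ.filter fun B => a.support ⊆ B).card : ℂ))
        = coeff a h * (((ℬ.filter fun B => a.support ⊆ B).card : ℂ) * (lamc : ℂ)) := by ring
      _ = coeff a h * ((lam : ℂ) * ((𝒦.filter fun B => a.support ⊆ B).card : ℂ)) := by rw [hcast]
      _ = (lam : ℂ) * (coeff a h * ((𝒦.filter fun B => a.support ⊆ B).card : ℂ)) := by ring
  have hzero : ∑ B ∈ ℬ, eval (charVec B) h = 0 := by
    apply Finset.sum_eq_zero
    intro B hB
    rw [hh, map_mul, hvan B hB, zero_mul]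
  rw [hzero, mul_zero] at hglobal
  have hlamne : (lam : ℂ) ≠ 0 := by
    simp only [ne_eq, Nat.cast_eq_zero]
    omega
  have hKsum : ∑ K ∈ 𝒦, eval (charVec K) h = 0 := by
    rcases mul_eq_zero.mp hglobal.symm with h' | h'
    · exact absurd h' hlamne
    · exact h'
  -- rewrite as sum of norms
  have hnorm : ∀ K ∈ 𝒦, eval (charVec K) h
      = ((Complex.normSq (eval (charVec K) g) : ℝ) : ℂ) := by
    intro K _
    rw [hh, map_mul, eval_charVec_conj, Complex.mul_conj]
  rw [Finset.sum_congr rfl hnorm] at hKsum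
  have hreal : ∑ K ∈ 𝒦, Complex.normSq (eval (charVec K) g) = 0 := by
    have := hKsum
    rw [← Complex.ofReal_sum] at this
    exact_mod_cast this
  intro K hK
  have hKmem : K ∈ 𝒦 := by
    rw [h𝒦, Finset.mem_powersetCard]
    exact ⟨Finset.subset_univ K, hK⟩
  have := (Finset.sum_eq_zero_iff_of_nonneg
    (fun K _ => Complex.normSq_nonneg _)).mp hreal K hKmem
  exact Complex.normSq_eq_zero.mp this


/-- in a non-trivial `t`-design, every non-trivial polynomial of the ideal
has degree `> t/2`; hence `γ₁(ℬ) ≥ (t+1)/2`. -/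
theorem nontrivial_degree_gt_half_t (v k t lam : ℕ) (ht : 2 ≤ t) (hlam : 1 ≤ lam)
    (htk : t ≤ k) (hkv : k ≤ v)
    (ℬ : Finset (Finset (Fin v))) (hdes : IsDesign ℬ k t lam) (hne : ℬ.Nonempty)
    (hnc : ℬ ≠ Finset.powersetCard k (Finset.univ : Finset (Fin v))) :
    (∀ f ∈ designIdeal ℬ, f ∉ trivialIdeal (Fin v) k →
        (t : ℝ) / 2 < (f.totalDegree : ℝ)) ∧
    ((t : ℝ) + 1) / 2 ≤ (gamma1 k ℬ : ℝ) := by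
  have hvcard : k ≤ Fintype.card (Fin v) := by rw [Fintype.card_fin]; exact hkv
  have hmem : ∀ f : MvPolynomial (Fin v) ℂ,
      f ∈ designIdeal ℬ ↔ ∀ B ∈ ℬ, eval (charVec B) f = 0 := by
    intro f
    simp [designIdeal, Ideal.mem_iInf, RingHom.mem_ker]
  have part1 : ∀ f ∈ designIdeal ℬ, f ∉ trivialIdeal (Fin v) k →
      (t : ℝ) / 2 < (f.totalDegree : ℝ) := by
    intro f hf hnt
    by_contra hle
    push_neg at hle
    have hdeg : 2 * f.totalDegree ≤ t := by
      have h1 : 2 * (f.totalDegree : ℝ) ≤ t := by linarith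
      exact_mod_cast h1
    have := vanish_all ℬ k t lam hdes hlam htk hvcard f hdeg ((hmem f).mp hf)
    exact hnt ((mem_trivialIdeal_iff k f).mpr this)
  refine ⟨part1, ?_⟩
  -- nonemptiness of the gamma1 set
  obtain ⟨K0, hK0mem, hK0not⟩ : ∃ K, K ∈ Finset.powersetCard k
      (Finset.univ : Finset (Fin v)) ∧ K ∉ ℬ := by
    have hsub : ℬ ⊆ Finset.powersetCard k Finset.univ := fun B hB =>
      Finset.mem_powersetCard.mpr ⟨Finset.subset_univ B, hdes.1 B hB⟩
    by_contra hc
    push_neg at hc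
    exact hnc (Finset.Subset.antisymm hsub fun K hK => hc K hK)
  set f₀ : MvPolynomial (Fin v) ℂ := 1 - ∑ B ∈ ℬ, indPoly B with hf₀
  have heval₀ : ∀ A : Finset (Fin v),
      eval (charVec A) f₀ = 1 - (if A ∈ ℬ then 1 else 0) := by
    intro A
    rw [hf₀, map_sub, map_one, map_sum]
    congr 1
    rw [Finset.sum_congr rfl (fun B _ => eval_indPoly A B), Finset.sum_ite_eq ℬ A fun _ => 1]
  have hf₀I : f₀ ∈ designIdeal ℬ := by
    rw [hmem]
    intro B hB
    rw [heval₀, if_pos hB, sub_self]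
  have hf₀T : f₀ ∉ trivialIdeal (Fin v) k := by
    rw [mem_trivialIdeal_iff]
    push_neg
    refine ⟨K0, (Finset.mem_powersetCard.mp hK0mem).2, ?_⟩
    rw [heval₀, if_neg hK0not, sub_zero]
    exact one_ne_zero
  have hDne : {d : ℕ | ∃ f ∈ designIdeal ℬ,
      f ∉ trivialIdeal (Fin v) k ∧ f.totalDegree = d}.Nonempty :=
    ⟨f₀.totalDegree, f₀, hf₀I, hf₀T, rfl⟩
  obtain ⟨f1, hf1I, hf1T, hf1d⟩ := Nat.sInf_mem hDne
  have hlt := part1 f1 hf1I hf1T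
  have hγ : gamma1 k ℬ = f1.totalDegree := hf1d.symm
  rw [hγ]
  have h1 : t < 2 * f1.totalDegree := by
    have : (t : ℝ) < 2 * (f1.totalDegree : ℝ) := by linarith
    exact_mod_cast this
  have h2 : t + 1 ≤ 2 * f1.totalDegree := h1
  have h3 : (t : ℝ) + 1 ≤ 2 * (f1.totalDegree : ℝ) := by exact_mod_cast h2
  linarith
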